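/- arXiv:2106.16081 — 2 statements merged into one kernel-verified Lean document; each statement's English description precedes it below -/
import Mathlib

section
/- Let A₁, A₂ be finite sets with |A₁| > 2 and |A₂| ≥ 2, and let Φ₁ : A₁ → Set A₂ satisfy: for every pair of distinct b₁, c₁ ∈ A₁, Φ₁(b₁) ∪ Φ₁(c₁) = A₂ whenever both are nonempty (the game is serial, i.e., Φ₁(a) ≠ ∅ for all a). Then there is no a₁ ∈ A₁ and a₂ ∈ A₂ with Φ₁(a₁) = {a₂} such that a₂ ∉ Φ₁(b₁) for every b₁ ≠ a₁. -/
lemma exists_pair_ne_of_two_lt_card {α : Type*} [Fintype α] [DecidableEq α]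
    (hα : 2 < Fintype.card α) (a : α) : ∃ b c : α, b ≠ a ∧ c ≠ a ∧ b ≠ c := by
  have hlt : 1 < ({a}ᶜ : Finset α).card := by
    rw [Finset.card_compl, Finset.card_singleton]
    omega
  obtain ⟨b, hb, c, hc, hbc⟩ := Finset.one_lt_card.mp hlt
  rw [Finset.mem_compl, Finset.mem_singleton] at hb hc
  exact ⟨b, c, hb, hc, hbc⟩

lemma exists_ne_mem_of_union_eq_univ {α β : Type*} [Fintype α]
    (hα : 2 < Fintype.card α) (Φ : α → Set β)
    (hcover : ∀ b c : α, b ≠ c → Φ b ∪ Φ c = Set.univ) (a : α) (x : β) :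
    ∃ b, b ≠ a ∧ x ∈ Φ b := by
  classical
  obtain ⟨b, c, hb, hc, hbc⟩ := exists_pair_ne_of_two_lt_card hα a
  have hx : x ∈ Φ b ∪ Φ c := hcover b c hbc ▸ Set.mem_univ x
  rcases hx with hxb | hxc
  · exact ⟨b, hb, hxb⟩
  · exact ⟨c, hc, hxc⟩

theorem stmt4_general {A₁ A₂ : Type*} [Fintype A₁]
    (hcard1 : 2 < Fintype.card A₁)
    (Φ : A₁ → Set A₂)
    (hcover : ∀ b c : A₁, b ≠ c → Φ b ∪ Φ c = Set.univ) :
    ¬ ∃ (a₁ : A₁) (a₂ : A₂), Φ a₁ = {a₂} ∧ ∀ b₁ : A₁, b₁ ≠ a₁ → a₂ ∉ Φ b₁ := by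
  rintro ⟨a₁, a₂, -, hunique⟩
  obtain ⟨b, hb, ha₂b⟩ := exists_ne_mem_of_union_eq_univ hcard1 Φ hcover a₁ a₂
  exact hunique b hb ha₂b

theorem stmt4 {A₁ A₂ : Type*} [Fintype A₁] [Fintype A₂]
    (hcard1 : 2 < Fintype.card A₁) (hcard2 : 2 ≤ Fintype.card A₂)
    (Φ : A₁ → Set A₂) (hserial : ∀ a, Φ a ≠ ∅)
    (hcover : ∀ b c : A₁, b ≠ c → Φ b ∪ Φ c = Set.univ) :
    ¬ ∃ (a₁ : A₁) (a₂ : A₂), Φ a₁ = {a₂} ∧ ∀ b₁ : A₁, b₁ ≠ a₁ → a₂ ∉ Φ b₁ :=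
  stmt4_general hcard1 Φ hcover
end

section
/- Let A₁, A₂ be finite sets, u : A₁ × A₂ → ℝ, and suppose a₁ ∈ A₁ with Φ₁(a₁) = ∅ where Φ₁(a₁) = ∪_{a₁'} {a₂ : u(a₁',a₂) − u(a₁,a₂) < max_{b₂}(u(a₁',b₂) − u(a₁,b₂))}. Then for any probability measure p on ℝ^{A₁} the quantity p({θ : θ(a₁) − θ(a₁') ≥ H̄(a₁,a₁') for all a₁' ≠ a₁}) equals p(E_{a₁}(π)) for every opponent mixed strategy π ∈ Δ(A₂), where E_{a₁}(π) = {θ : u(a₁,π) + θ(a₁) ≥ u(a₁',π) + θ(a₁') for all a₁'}. -/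
open MeasureTheory

/-!
Since `Φ₁(a₁) = ∅`, each difference `u a₁' b - u a₁ b` attains its maximum `H̄(a₁, a₁')` at every
`b`, i.e. it is constant in `b`. Averaging against any mixed strategy `π` therefore gives
`u(a₁', π) - u(a₁, π) = H̄(a₁, a₁')`, so the best-response set `E_{a₁}(π)` is the threshold set
`{θ | θ a₁ - θ a₁' ≥ H̄(a₁, a₁')}` for every `π`, and the two measures agree.
-/

lemma eq_ciSup_of_forall_not_lt {ι : Type*} [Finite ι] {f : ι → ℝ}
    (h : ∀ b, ¬ f b < ⨆ c, f c) (b : ι) : f b = ⨆ c, f c :=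
  (le_ciSup (Set.finite_range f).bddAbove b).antisymm (not_lt.1 (h b))

lemma sum_mul_eq_sum_mul_add_of_forall_sub_eq {ι : Type*} [Fintype ι] {π f g : ι → ℝ} {c : ℝ}
    (hsum : ∑ b, π b = 1) (hfg : ∀ b, g b - f b = c) :
    ∑ b, π b * g b = ∑ b, π b * f b + c := by
  have hg : ∀ b, π b * g b = π b * f b + π b * c := fun b => by
    rw [← mul_add, ← hfg b, add_sub_cancel]
  simp only [hg, Finset.sum_add_distrib, ← Finset.sum_mul, hsum, one_mul]

lemma setOf_forall_expected_le_eq_of_forall_sub_eq {A₁ A₂ : Type*} [Fintype A₂]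
    {u : A₁ → A₂ → ℝ} {a₁ : A₁} {H : A₁ → ℝ} (hH : ∀ a₁' b, u a₁' b - u a₁ b = H a₁')
    {π : A₂ → ℝ} (hsum : ∑ b, π b = 1) :
    {θ : A₁ → ℝ | ∀ a₁', (∑ b, π b * u a₁' b) + θ a₁' ≤ (∑ b, π b * u a₁ b) + θ a₁} =
      {θ : A₁ → ℝ | ∀ a₁', θ a₁ - θ a₁' ≥ H a₁'} := by
  ext θ
  refine forall_congr' fun a₁' => ?_
  rw [sum_mul_eq_sum_mul_add_of_forall_sub_eq hsum (hH a₁')]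
  constructor <;> intro h <;> linarith

theorem stmt19_general {A₁ A₂ : Type*} [Fintype A₂]
    (u : A₁ → A₂ → ℝ) (a₁ : A₁)
    (hns : {b : A₂ | ∃ a₁' : A₁,
      u a₁' b - u a₁ b < ⨆ c, (u a₁' c - u a₁ c)} = ∅)
    (p : Measure (A₁ → ℝ)) :
    ∀ π : A₂ → ℝ, (∀ b, 0 ≤ π b) → (∑ b, π b = 1) →
      p {θ : A₁ → ℝ | ∀ a₁' : A₁, θ a₁ - θ a₁' ≥ ⨆ b, (u a₁' b - u a₁ b)} =
        p {θ : A₁ → ℝ | ∀ a₁' : A₁,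
          (∑ b, π b * u a₁' b) + θ a₁' ≤ (∑ b, π b * u a₁ b) + θ a₁} := by
  intro π _ hsum
  have hconst : ∀ a₁' b, u a₁' b - u a₁ b = ⨆ c, (u a₁' c - u a₁ c) := fun a₁' =>
    eq_ciSup_of_forall_not_lt fun b hb => (Set.eq_empty_iff_forall_notMem.1 hns) b ⟨a₁', hb⟩
  rw [setOf_forall_expected_le_eq_of_forall_sub_eq hconst hsum]

theorem stmt19 {A₁ A₂ : Type*} [Fintype A₁] [Fintype A₂] [Nonempty A₂]
    (u : A₁ → A₂ → ℝ) (a₁ : A₁)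
    (hns : {b : A₂ | ∃ a₁' : A₁,
      u a₁' b - u a₁ b < ⨆ c, (u a₁' c - u a₁ c)} = ∅)
    (p : Measure (A₁ → ℝ)) [IsProbabilityMeasure p] :
    ∀ π : A₂ → ℝ, (∀ b, 0 ≤ π b) → (∑ b, π b = 1) →
      p {θ : A₁ → ℝ | ∀ a₁' : A₁, θ a₁ - θ a₁' ≥ ⨆ b, (u a₁' b - u a₁ b)} =
        p {θ : A₁ → ℝ | ∀ a₁' : A₁,
          (∑ b, π b * u a₁' b) + θ a₁' ≤ (∑ b, π b * u a₁ b) + θ a₁} :=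
  stmt19_general u a₁ hns p
end
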